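/- arXiv:1104.4075 — 6 statements merged into one kernel-verified Lean document; each statement's English description precedes it below -/
import Mathlib

section
/- Let A be an n×n alternating sign matrix with pattern row sum vector R = (r_1,...,r_n) and pattern column sum vector S = (s_1,...,s_n). Then for every i with 1 ≤ i ≤ n−1, ((r_i − 1)/2) + ((r_{i+1} − 1)/2) ≤ |{j : s_j ≥ 3}|. -/
/-- An alternating sign matrix: entries in {0,1,-1}, all row and column sums
equal 1, and all partial row and column sums (from the start) are 0 or 1. -/
def IsASM {n : ℕ} (A : Matrix (Fin n) (Fin n) ℤ) : Prop :=
  (∀ i j, A i j = 0 ∨ A i j = 1 ∨ A i j = -1) ∧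
  (∀ i, ∑ j, A i j = 1) ∧
  (∀ j, ∑ i, A i j = 1) ∧
  (∀ i k, (∑ j ∈ Finset.Iic k, A i j) = 0 ∨ (∑ j ∈ Finset.Iic k, A i j) = 1) ∧
  (∀ j k, (∑ i ∈ Finset.Iic k, A i j) = 0 ∨ (∑ i ∈ Finset.Iic k, A i j) = 1)

/-!
Each row of an ASM has one more `+1` than `-1`, so `r i = 2 m_i + 1` where `m_i` counts the
`-1`s of row `i`, and every column containing a `-1` has at least three nonzero entries. The
`-1`s of two consecutive rows lie in different columns: a `-1` in row `k` of a column brings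
its partial sum down to `0`, so a second `-1` right below it would make the partial sum
negative. Hence `m_i + m_{i+1}` distinct columns have `s_j ≥ 3`.
-/

open Finset

lemma card_ne_zero_eq_two_mul_card_neg_one_add_one {ι : Type*} [Fintype ι] (f : ι → ℤ)
    (hf : ∀ j, f j = 0 ∨ f j = 1 ∨ f j = -1) (hsum : ∑ j, f j = 1) :
    #{j | f j ≠ 0} = 2 * #{j | f j = -1} + 1 := by
  have pointwise :
      ∀ j, (if f j ≠ 0 then 1 else 0 : ℤ) = f j + 2 * if f j = -1 then 1 else 0 := by
    intro j
    rcases hf j with h | h | h <;> simp [h]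
  have : (#{j | f j ≠ 0} : ℤ) = 2 * #{j | f j = -1} + 1 := by
    simp only [natCast_card_filter, sum_congr rfl fun j _ => pointwise j, sum_add_distrib,
      hsum, ← mul_sum]
    ring
  exact_mod_cast this

lemma Fin.Iio_eq_Iic_of_val_eq_add_one {n : ℕ} {j k : Fin n} (h : k.val = j.val + 1) :
    Iio k = Iic j := by
  ext x
  simp only [mem_Iio, mem_Iic, Fin.lt_def, Fin.le_def]
  omega

section PartialSums

variable {n : ℕ} (g : Fin n → ℤ)
  (hg : ∀ k, ∑ j ∈ Iic k, g j = 0 ∨ ∑ j ∈ Iic k, g j = 1)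
include hg

lemma sum_Iio_eq_zero_or_eq_one (k : Fin n) :
    ∑ j ∈ Iio k, g j = 0 ∨ ∑ j ∈ Iio k, g j = 1 := by
  rcases Nat.eq_zero_or_pos k.val with hk | hk
  · left
    apply sum_eq_zero
    intro j hj
    simp only [mem_Iio, Fin.lt_def] at hj
    omega
  · rw [Fin.Iio_eq_Iic_of_val_eq_add_one (j := ⟨k.val - 1, by omega⟩)
      (Nat.succ_pred_eq_of_pos hk).symm]
    exact hg _

lemma sum_Iic_eq_zero_of_eq_neg_one {k : Fin n} (hk : g k = -1) : ∑ j ∈ Iic k, g j = 0 := by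
  have := sum_Iio_add_eq_sum_Iic (f := g) k
  have := sum_Iio_eq_zero_or_eq_one g hg k
  have := hg k
  omega

lemma not_eq_neg_one_and_eq_neg_one_succ (i : ℕ) (hi : i + 1 < n) :
    ¬ (g ⟨i, i.lt_of_succ_lt hi⟩ = -1 ∧ g ⟨i + 1, hi⟩ = -1) := by
  rintro ⟨hfirst, hsecond⟩
  have hsplit := sum_Iio_add_eq_sum_Iic (f := g) ⟨i + 1, hi⟩
  rw [Fin.Iio_eq_Iic_of_val_eq_add_one (j := ⟨i, i.lt_of_succ_lt hi⟩) rfl,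
    sum_Iic_eq_zero_of_eq_neg_one g hg hfirst, hsecond] at hsplit
  have := hg ⟨i + 1, hi⟩
  omega

end PartialSums

namespace IsASM

variable {n : ℕ} {A : Matrix (Fin n) (Fin n) ℤ}

lemma card_row_ne_zero (hA : IsASM A) (i : Fin n) :
    #{j | A i j ≠ 0} = 2 * #{j | A i j = -1} + 1 :=
  card_ne_zero_eq_two_mul_card_neg_one_add_one (A i) (hA.1 i) (hA.2.1 i)

lemma three_le_card_col_ne_zero (hA : IsASM A) {i j : Fin n} (hij : A i j = -1) :
    3 ≤ #{k | A k j ≠ 0} := by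
  have hpos : 0 < #{k | A k j = -1} := card_pos.mpr ⟨i, by simp [hij]⟩
  rw [card_ne_zero_eq_two_mul_card_neg_one_add_one (fun k => A k j) (hA.1 · j) (hA.2.2.1 j)]
  omega

lemma disjoint_neg_one_row_succ (hA : IsASM A) (i : ℕ) (hi : i + 1 < n) :
    Disjoint ({j | A ⟨i, i.lt_of_succ_lt hi⟩ j = -1} : Finset (Fin n))
      ({j | A ⟨i + 1, hi⟩ j = -1} : Finset (Fin n)) := by
  simp only [disjoint_left, mem_filter, mem_univ, true_and]
  exact fun j h₀ h₁ =>
    not_eq_neg_one_and_eq_neg_one_succ (fun k => A k j) (hA.2.2.2.2 j) i hi ⟨h₀, h₁⟩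

end IsASM

theorem stmt_8 {n : ℕ} (A : Matrix (Fin n) (Fin n) ℤ) (hA : IsASM A)
    (r s : Fin n → ℕ)
    (hr : ∀ i, r i = (Finset.univ.filter (fun j => A i j ≠ 0)).card)
    (hs : ∀ j, s j = (Finset.univ.filter (fun i => A i j ≠ 0)).card)
    (i : ℕ) (hi : i + 1 < n) :
    (r ⟨i, by omega⟩ - 1) / 2 + (r ⟨i + 1, hi⟩ - 1) / 2 ≤
      (Finset.univ.filter (fun j : Fin n => 3 ≤ s j)).card := by
  have hsub : ({j | A ⟨i, i.lt_of_succ_lt hi⟩ j = -1} : Finset (Fin n)) ∪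
      ({j | A ⟨i + 1, hi⟩ j = -1} : Finset (Fin n)) ⊆
      ({j | 3 ≤ s j} : Finset (Fin n)) := by
    intro j hj
    simp only [mem_union, mem_filter, mem_univ, true_and] at hj ⊢
    rw [hs]
    rcases hj with h | h <;> exact hA.three_le_card_col_ne_zero h
  have hcard := card_le_card hsub
  rw [card_union_of_disjoint (hA.disjoint_neg_one_row_succ i hi)] at hcard
  rw [hr, hr, hA.card_row_ne_zero, hA.card_row_ne_zero]
  omega
end

section
/- There is no 5×5 alternating sign matrix whose pattern has row sum vector (1,1,5,1,1) and column sum vector (1,1,5,1,1). -/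
theorem stmt_9 :
    ¬ ∃ A : Matrix (Fin 5) (Fin 5) ℤ, IsASM A ∧
      (∀ i : Fin 5, (Finset.univ.filter (fun j => A i j ≠ 0)).card = ![1,1,5,1,1] i) ∧
      (∀ j : Fin 5, (Finset.univ.filter (fun i => A i j ≠ 0)).card = ![1,1,5,1,1] j) := by
  rintro ⟨A, ⟨_, _, hcs, hpr, _⟩, hr, hc⟩
  -- row 2 has 5 nonzero entries, so all entries of row 2 are nonzero
  have hrow2 : ∀ j, A 2 j ≠ 0 := by
    intro j
    have h5 := hr 2
    simp only [Matrix.cons_val_two, Matrix.tail_cons, Matrix.head_cons] at h5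
    have : (Finset.univ.filter (fun j => A 2 j ≠ 0)) = Finset.univ := by
      apply Finset.eq_univ_of_card
      simpa using h5
    have := Finset.eq_univ_iff_forall.mp this j
    simpa using this
  -- A 2 0 = 1
  have hI0 : Finset.Iic (0 : Fin 5) = {0} := by decide
  have hI1 : Finset.Iic (1 : Fin 5) = {0, 1} := by decide
  have h20 : A 2 0 = 1 := by
    have := hpr 2 0
    rw [hI0, Finset.sum_singleton] at this
    rcases this with h | h
    · exact absurd h (hrow2 0)
    · exact h
  have h21 : A 2 1 = -1 := by
    have := hpr 2 1
    rw [hI1, Finset.sum_insert (by decide), Finset.sum_singleton, h20] at this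
    rcases this with h | h <;> [linarith; exfalso]
    have : A 2 1 = 0 := by linarith
    exact hrow2 1 this
  -- column 1 has exactly one nonzero entry, which is A 2 1
  have hcard : (Finset.univ.filter (fun i => A i 1 ≠ 0)).card = 1 := by
    simpa using hc 1
  have hmem : (2 : Fin 5) ∈ Finset.univ.filter (fun i => A i 1 ≠ 0) := by
    simp [hrow2 1]
  have hfilt : Finset.univ.filter (fun i => A i 1 ≠ 0) = {2} := by
    rcases Finset.card_eq_one.mp hcard with ⟨a, ha⟩
    rw [ha] at hmem ⊢
    simp at hmem
    rw [hmem]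
  have hzero : ∀ i : Fin 5, i ≠ 2 → A i 1 = 0 := by
    intro i hi
    by_contra h
    have : i ∈ Finset.univ.filter (fun i => A i 1 ≠ 0) := by simp [h]
    rw [hfilt] at this
    simp at this
    exact hi this
  have := hcs 1
  rw [Fin.sum_univ_five] at this
  rw [hzero 0 (by decide), hzero 1 (by decide), hzero 3 (by decide),
      hzero 4 (by decide), h21] at this
  linarith
end

section
/- If A is an n×n alternating sign matrix whose associated signed bipartite graph is a tree (i.e., A has exactly 2n−1 nonzero entries and is connected), then n is odd. -/
/-- The bipartite graph of an ASM: vertices are the rows and the columns,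
with an edge between row i and column j iff A i j ≠ 0. -/
def BG {n : ℕ} (A : Matrix (Fin n) (Fin n) ℤ) : SimpleGraph (Fin n ⊕ Fin n) where
  Adj x y := (∃ i j, x = Sum.inl i ∧ y = Sum.inr j ∧ A i j ≠ 0) ∨
    (∃ i j, x = Sum.inr j ∧ y = Sum.inl i ∧ A i j ≠ 0)
  symm := by
    constructor
    rintro x y (⟨i, j, hx, hy, h⟩ | ⟨i, j, hx, hy, h⟩)
    · exact Or.inr ⟨i, j, hy, hx, h⟩
    · exact Or.inl ⟨i, j, hy, hx, h⟩
  loopless := by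
    constructor
    rintro x (⟨i, j, hx, hy, h⟩ | ⟨i, j, hx, hy, h⟩) <;> rw [hx] at hy <;> simp at hy

/-!
Every row of an ASM sums to 1 and has entries in {0, ±1}, so it has an odd number of
nonzero entries. Counting the nonzero entries row by row, their total has the parity of n;
since 2n - 1 is odd (n ≥ 1 because the graph is nonempty), n is odd.
-/

open Finset

lemma natCast_card_ne_zero_eq_intCast_sum {ι : Type*} [Fintype ι] (f : ι → ℤ)
    (hf : ∀ j, f j = 0 ∨ f j = 1 ∨ f j = -1) :
    (#{j | f j ≠ 0} : ZMod 2) = ((∑ j, f j : ℤ) : ZMod 2) := by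
  rw [card_filter, Nat.cast_sum, Int.cast_sum]
  refine sum_congr rfl fun j _ => ?_
  rcases hf j with h | h | h <;> simp [h]

lemma IsASM.odd_card_row_ne_zero {n : ℕ} {A : Matrix (Fin n) (Fin n) ℤ} (hA : IsASM A)
    (i : Fin n) : Odd #{j | A i j ≠ 0} := by
  rw [← ZMod.natCast_eq_one_iff_odd, natCast_card_ne_zero_eq_intCast_sum _ (hA.1 i), hA.2.1 i,
    Int.cast_one]

lemma Matrix.card_ne_zero_eq_sum_card_row_ne_zero {ι κ R : Type*} [Fintype ι] [Fintype κ]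
    [Zero R] [DecidableEq R] (M : Matrix ι κ R) :
    #{x : ι × κ | M x.1 x.2 ≠ 0} = ∑ i, #{j | M i j ≠ 0} := by
  simp only [card_filter, ← univ_product_univ, sum_product]

theorem stmt_10 {n : ℕ} (A : Matrix (Fin n) (Fin n) ℤ) (hA : IsASM A)
    (hconn : (BG A).Connected)
    (hcount : (Finset.univ.filter (fun p : Fin n × Fin n => A p.1 p.2 ≠ 0)).card = 2 * n - 1) :
    Odd n := by
  have hn : 0 < n := by
    obtain ⟨i | i⟩ := hconn.nonempty <;> exact i.pos
  have hodd : Odd (∑ i, #{j | A i j ≠ 0}) := by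
    rw [← A.card_ne_zero_eq_sum_card_row_ne_zero, hcount]
    exact ⟨n - 1, by omega⟩
  rw [odd_sum_iff_odd_card_odd, filter_true_of_mem fun i _ => hA.odd_card_row_ne_zero i] at hodd
  simpa using hodd
end

section
/- Let A be an n×n alternating sign matrix with term rank t (the maximum number of nonzero entries of A, no two in the same row or column). Then t ≥ ⌈2√(n+1) − 2⌉. -/
/-- The term rank of a matrix: the maximum number of nonzero entries,
no two in the same row or column. -/
noncomputable def termRank {n : ℕ} (A : Matrix (Fin n) (Fin n) ℤ) : ℕ :=
  sSup {m : ℕ | ∃ s : Finset (Fin n × Fin n), s.card = m ∧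
    (∀ p ∈ s, A p.1 p.2 ≠ 0) ∧
    Set.InjOn Prod.fst (s : Set (Fin n × Fin n)) ∧
    Set.InjOn Prod.snd (s : Set (Fin n × Fin n))}

open Finset in
theorem stmt_12 {n : ℕ} (A : Matrix (Fin n) (Fin n) ℤ) (hA : IsASM A) :
    ⌈2 * Real.sqrt (n + 1) - 2⌉ ≤ (termRank A : ℤ) := by
  classical
  obtain ⟨h01, hrow, hcol, -, -⟩ := hA
  by_cases hn : n = 0
  · subst hn
    rw [Int.ceil_le]
    push_cast
    have h1 : Real.sqrt (0 + 1) = 1 := by norm_num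
    rw [h1]
    have : (0:ℝ) ≤ (termRank A : ℝ) := by positivity
    linarith
  have hpos : 0 < n := Nat.pos_of_ne_zero hn
  set NB : Finset (Fin n) → Finset (Fin n) :=
    fun S => univ.filter (fun j => ∃ i ∈ S, A i j ≠ 0) with hNB
  obtain ⟨S, -, hSmax⟩ := Finset.exists_max_image (univ : Finset (Fin n)).powerset
    (fun S => (S.card : ℤ) - ((NB S).card : ℤ)) ⟨∅, Finset.empty_mem_powerset _⟩
  have hSmax' : ∀ S' : Finset (Fin n), (S'.card : ℤ) - ((NB S')).card ≤
      (S.card : ℤ) - (NB S).card := fun S' => hSmax S' (mem_powerset.2 (subset_univ _))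
  have hd0 : (0 : ℤ) ≤ (S.card : ℤ) - (NB S).card := by
    have := hSmax' ∅
    simpa [hNB] using this
  set d : ℕ := S.card - (NB S).card with hd
  have hdcard : (NB S).card ≤ S.card := by
    have : ((NB S).card : ℤ) ≤ S.card := by linarith
    exact_mod_cast this
  have hdZ : (d : ℤ) = (S.card : ℤ) - (NB S).card := by
    rw [hd]; push_cast [Nat.cast_sub hdcard]; ring
  -- Hall's theorem with d dummy vertices
  set t' : Fin n → Finset (Fin n ⊕ Fin d) :=
    fun i => (NB {i}).image Sum.inl ∪ (univ : Finset (Fin d)).image Sum.inr with ht'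
  have hall : ∀ s : Finset (Fin n), s.card ≤ (s.biUnion t').card := by
    intro s
    rcases s.eq_empty_or_nonempty with rfl | ⟨i0, hi0⟩
    · simp
    have hsub : (NB s).image Sum.inl ∪ (univ : Finset (Fin d)).image Sum.inr ⊆
        s.biUnion t' := by
      intro x hx
      rcases Finset.mem_union.1 hx with hx | hx
      · obtain ⟨j, hj, rfl⟩ := Finset.mem_image.1 hx
        obtain ⟨i, hi, hij⟩ := (Finset.mem_filter.1 hj).2
        exact Finset.mem_biUnion.2 ⟨i, hi, Finset.mem_union_left _
          (Finset.mem_image.2 ⟨j, Finset.mem_filter.2 ⟨Finset.mem_univ _,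
            ⟨i, Finset.mem_singleton_self i, hij⟩⟩, rfl⟩)⟩
      · exact Finset.mem_biUnion.2 ⟨i0, hi0, Finset.mem_union_right _ hx⟩
    have hcardu : ((NB s).image Sum.inl ∪ (univ : Finset (Fin d)).image Sum.inr).card
        = (NB s).card + d := by
      rw [Finset.card_union_of_disjoint, Finset.card_image_of_injective _ Sum.inl_injective,
        Finset.card_image_of_injective _ Sum.inr_injective, Finset.card_univ, Fintype.card_fin]
      simp [Finset.disjoint_left]
    have hs : (s.card : ℤ) ≤ (NB s).card + d := by
      have := hSmax' s; rw [hdZ]; linarith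
    have hs' : s.card ≤ (NB s).card + d := by exact_mod_cast hs
    calc s.card ≤ (NB s).card + d := hs'
      _ = ((NB s).image Sum.inl ∪ (univ : Finset (Fin d)).image Sum.inr).card := hcardu.symm
      _ ≤ (s.biUnion t').card := Finset.card_le_card hsub
  obtain ⟨f, hfinj, hft⟩ := (Finset.all_card_le_biUnion_card_iff_exists_injective t').1 hall
  -- Build the matching
  set P : Finset (Fin n) := univ.filter (fun i => (f i).isLeft) with hP
  set g : Fin n → Fin n := fun i => ((f i).getLeft?).getD ⟨0, hpos⟩ with hg
  have hgP : ∀ i ∈ P, f i = Sum.inl (g i) := by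
    intro i hi
    have h' := (Finset.mem_filter.1 hi).2
    cases h : f i with
    | inl j => simp [hg, h]
    | inr k => rw [h] at h'; simp at h'
  set s₀ : Finset (Fin n × Fin n) := P.image (fun i => (i, g i)) with hs₀
  have hs₀card : s₀.card = P.card := by
    rw [hs₀]
    apply Finset.card_image_of_injective
    intro a b hab
    exact (Prod.ext_iff.1 hab).1
  have hPcard : (n : ℤ) - d ≤ P.card := by
    have hPc : Pᶜ.card ≤ d := by
      have hright : ∀ i ∈ Pᶜ, (f i).isRight := by
        intro i hi
        have h' := Finset.mem_compl.1 hi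
        simp only [hP, Finset.mem_filter, Finset.mem_univ, true_and] at h'
        exact Sum.not_isLeft.1 h'
      rcases Nat.eq_zero_or_pos d with hd' | hd'
      · have hPe : Pᶜ = ∅ := by
          rw [Finset.eq_empty_iff_forall_notMem]
          intro i hi
          obtain ⟨k, hk⟩ := Sum.isRight_iff.1 (hright i hi)
          exact absurd k.2 (by omega)
        simp [hPe]
      · set F : Fin n → Fin d := fun i => ((f i).getRight?).getD ⟨0, hd'⟩ with hF
        have hFr : ∀ i ∈ Pᶜ, f i = Sum.inr (F i) := by
          intro i hi
          obtain ⟨k, hk⟩ := Sum.isRight_iff.1 (hright i hi)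
          simp [hF, hk]
        have hc := Finset.card_le_card_of_injOn (s := Pᶜ) (t := univ) F
          (fun i _ => Finset.mem_univ _) ?_
        · simpa using hc
        · intro a ha b hb heq
          apply hfinj
          rw [hFr a ha, hFr b hb, heq]
    have hPn : P.card + Pᶜ.card = n := by
      rw [Finset.card_add_card_compl, Fintype.card_fin]
    omega
  -- s₀ witnesses termRank ≥ P.card
  have hmem : P.card ∈ {m : ℕ | ∃ s : Finset (Fin n × Fin n), s.card = m ∧
      (∀ p ∈ s, A p.1 p.2 ≠ 0) ∧
      Set.InjOn Prod.fst (s : Set (Fin n × Fin n)) ∧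
      Set.InjOn Prod.snd (s : Set (Fin n × Fin n))} := by
    refine ⟨s₀, hs₀card, ?_, ?_, ?_⟩
    · rintro ⟨i, j⟩ hp
      obtain ⟨i', hi', heq⟩ := Finset.mem_image.1 hp
      injection heq with h1 h2
      subst h1; subst h2
      have hmem' := hft i'
      rw [hgP i' hi'] at hmem'
      rcases Finset.mem_union.1 hmem' with hmem' | hmem'
      · obtain ⟨j', hj', hjj⟩ := Finset.mem_image.1 hmem'
        have hj'' : j' = g i' := Sum.inl_injective hjj
        subst hj''
        obtain ⟨i'', -, hne⟩ := (Finset.mem_filter.1 hj').2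
        simp only [Finset.mem_singleton] at *
        obtain ⟨i3, hi3, hne3⟩ := (Finset.mem_filter.1 hj').2
        rw [Finset.mem_singleton] at hi3
        subst hi3
        exact hne3
      · obtain ⟨k, -, hk⟩ := Finset.mem_image.1 hmem'
        exact absurd hk (by simp)
    · rintro ⟨i, j⟩ hp ⟨i', j'⟩ hp' heq
      rw [hs₀, Finset.coe_image] at hp hp'
      obtain ⟨a, ha, heqa⟩ := hp
      obtain ⟨b, hb, heqb⟩ := hp'
      injection heqa with ha1 ha2
      injection heqb with hb1 hb2
      subst ha1; subst ha2; subst hb1; subst hb2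
      simp only at heq
      subst heq
      rfl
    · rintro ⟨i, j⟩ hp ⟨i', j'⟩ hp' heq
      rw [hs₀, Finset.coe_image] at hp hp'
      obtain ⟨a, ha, heqa⟩ := hp
      obtain ⟨b, hb, heqb⟩ := hp'
      injection heqa with ha1 ha2
      injection heqb with hb1 hb2
      subst ha1; subst ha2; subst hb1; subst hb2
      simp only at heq
      have hfab : f a = f b := by
        rw [hgP a (by simpa using ha), hgP b (by simpa using hb), heq]
      have hab := hfinj hfab
      subst hab; rfl
  have hbdd : BddAbove {m : ℕ | ∃ s : Finset (Fin n × Fin n), s.card = m ∧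
      (∀ p ∈ s, A p.1 p.2 ≠ 0) ∧
      Set.InjOn Prod.fst (s : Set (Fin n × Fin n)) ∧
      Set.InjOn Prod.snd (s : Set (Fin n × Fin n))} := by
    refine ⟨n, ?_⟩
    rintro m ⟨s, rfl, -, hfst, -⟩
    calc s.card = (s.image Prod.fst).card := (Finset.card_image_of_injOn hfst).symm
      _ ≤ (univ : Finset (Fin n)).card := Finset.card_le_card (Finset.subset_univ _)
      _ = n := by simp
  have htr : P.card ≤ termRank A := le_csSup hbdd hmem
  -- Block sum computation
  set e : ℕ := Sᶜ.card with he
  set fc : ℕ := (NB S).card with hfc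
  have hen : e + S.card = n := by
    have h5 : S.card ≤ n := by
      have := Finset.card_le_univ S
      simpa using this
    rw [he, Finset.card_compl, Fintype.card_fin]
    omega
  have hzero : ∀ i ∈ S, ∀ j, j ∉ NB S → A i j = 0 := by
    intro i hi j hj
    by_contra hne
    exact hj (Finset.mem_filter.2 ⟨Finset.mem_univ _, ⟨i, hi, hne⟩⟩)
  have hrowS : ∀ i ∈ S, ∑ j ∈ NB S, A i j = 1 := by
    intro i hi
    have hss := Finset.sum_subset (Finset.subset_univ (NB S))
      (fun j _ hj => hzero i hi j hj)
    rw [hss]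
    exact hrow i
  have hblock : ∑ j ∈ NB S, ∑ i ∈ Sᶜ, A i j = (fc : ℤ) - S.card := by
    have h1 : ∀ j ∈ NB S, ∑ i ∈ Sᶜ, A i j = 1 - ∑ i ∈ S, A i j := by
      intro j _
      have h2 := Finset.sum_add_sum_compl S (fun i => A i j)
      rw [hcol j] at h2
      linarith
    calc ∑ j ∈ NB S, ∑ i ∈ Sᶜ, A i j
        = ∑ j ∈ NB S, (1 - ∑ i ∈ S, A i j) := Finset.sum_congr rfl h1
      _ = (fc : ℤ) - ∑ i ∈ S, ∑ j ∈ NB S, A i j := by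
          rw [Finset.sum_sub_distrib, Finset.sum_comm]; simp [hfc]
      _ = (fc : ℤ) - S.card := by
          rw [Finset.sum_congr rfl hrowS]; simp
  have hblock_lb : -((fc : ℤ) * e) ≤ ∑ j ∈ NB S, ∑ i ∈ Sᶜ, A i j := by
    have hstep : ∑ j ∈ NB S, ∑ i ∈ Sᶜ, (-1 : ℤ) ≤ ∑ j ∈ NB S, ∑ i ∈ Sᶜ, A i j := by
      apply Finset.sum_le_sum
      intro j _
      apply Finset.sum_le_sum
      intro i _
      rcases h01 i j with h | h | h <;> omega
    have hconst : ∑ j ∈ NB S, ∑ i ∈ Sᶜ, (-1 : ℤ) = -((fc : ℤ) * e) := by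
      simp [hfc, he, Finset.sum_const, mul_comm]
    linarith [hconst ▸ hstep]
  have hkey : (n : ℤ) + 1 ≤ ((e : ℤ) + 1) * ((fc : ℤ) + 1) := by
    rw [hblock] at hblock_lb
    have hSc : (S.card : ℤ) = n - e := by
      have : (e : ℤ) + S.card = n := by exact_mod_cast hen
      linarith
    nlinarith
  have htR : (e : ℤ) + fc ≤ (termRank A : ℤ) := by
    have h1 : ((n : ℤ) - d) ≤ termRank A := le_trans hPcard (by exact_mod_cast htr)
    have h2 : (n : ℤ) - d = e + fc := by
      rw [hdZ]
      have : (e : ℤ) + S.card = n := by exact_mod_cast hen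
      linarith
    linarith
  -- Final arithmetic
  rw [Int.ceil_le]
  set T : ℤ := (termRank A : ℤ) with hT
  have hTnn : (0 : ℤ) ≤ T := Int.natCast_nonneg _
  have hsq : 4 * ((n : ℤ) + 1) ≤ (T + 2) ^ 2 := by nlinarith [sq_nonneg ((e : ℤ) - fc)]
  have hsqR : ((n : ℝ) + 1) ≤ (((T : ℝ) + 2) / 2) ^ 2 := by
    have h4 : (4 : ℝ) * ((n : ℝ) + 1) ≤ ((T : ℝ) + 2) ^ 2 := by exact_mod_cast hsq
    nlinarith
  have hTnnR : (0 : ℝ) ≤ ((T : ℝ) + 2) / 2 := by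
    have : (0:ℝ) ≤ (T:ℝ) := by exact_mod_cast hTnn
    linarith
  have hs5 := Real.sqrt_le_sqrt hsqR
  rw [Real.sqrt_sq hTnnR] at hs5
  linarith
end

section
/- Suppose all nonzero entries of an n×n alternating sign matrix A are contained in a set of e rows and f columns. Then the submatrix A_1 of A formed by these e rows and f columns satisfies: (number of −1 entries in A_1) − (number of +1 entries in A_1) = n − (e+f). In particular, n − (e+f) ≤ e·f. -/
/-!
Sum `A` over the block `E × F`. Every nonzero entry of a row outside `E` lies in a column of `F`,
so these `n - #E` rows contribute their full row sum `1` to the columns of `F`, whose total is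
`#F`; hence the block sum is `#E + #F - n`. Since the entries are `0, ±1`, the block sum is also
`#(+1) - #(-1)`, and `#(-1) ≤ #E * #F` gives the inequality.
-/

open Finset

lemma sum_eq_card_filter_one_sub_card_filter_neg_one {ι : Type*} (s : Finset ι) (f : ι → ℤ)
    (hf : ∀ x ∈ s, f x = 0 ∨ f x = 1 ∨ f x = -1) :
    ∑ x ∈ s, f x = #(s.filter (f · = 1)) - #(s.filter (f · = -1)) := by
  rw [card_filter, card_filter]
  push_cast
  rw [← sum_sub_distrib]
  refine sum_congr rfl fun x hx => ?_
  rcases hf x hx with h | h | h <;> simp [h]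

lemma filter_mem_and_mem_and {α β : Type*} [Fintype α] [Fintype β] [DecidableEq α] [DecidableEq β]
    (E : Finset α) (F : Finset β) (P : α × β → Prop) [DecidablePred P] :
    univ.filter (fun p : α × β => p.1 ∈ E ∧ p.2 ∈ F ∧ P p) = (E ×ˢ F).filter P := by
  ext p
  simp [and_assoc]

namespace Matrix

variable {m n R : Type*} [Fintype m] [Fintype n] [DecidableEq m] [AddCommGroup R]

lemma sum_block_eq_of_support_subset (A : Matrix m n R) (E : Finset m) (F : Finset n)
    (hcover : ∀ i j, A i j ≠ 0 → i ∈ E ∨ j ∈ F) :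
    ∑ i ∈ E, ∑ j ∈ F, A i j = ∑ j ∈ F, ∑ i, A i j - ∑ i ∈ Eᶜ, ∑ j, A i j := by
  have hrow : ∀ i ∈ Eᶜ, ∑ j ∈ F, A i j = ∑ j, A i j := fun i hi =>
    sum_subset (subset_univ F) fun j _ hj => by
      by_contra h
      exact (hcover i j h).elim (mem_compl.mp hi) hj
  rw [sum_comm (s := F), ← sum_add_sum_compl E, sum_congr rfl hrow, add_sub_cancel_right]

lemma sum_block_eq_of_row_col_sum_one (A : Matrix m n ℤ) (hrow : ∀ i, ∑ j, A i j = 1)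
    (hcol : ∀ j, ∑ i, A i j = 1) (E : Finset m) (F : Finset n)
    (hcover : ∀ i j, A i j ≠ 0 → i ∈ E ∨ j ∈ F) :
    ∑ i ∈ E, ∑ j ∈ F, A i j = #E + #F - Fintype.card m := by
  rw [sum_block_eq_of_support_subset A E F hcover]
  simp only [hrow, hcol, sum_const, card_compl, nsmul_eq_mul, mul_one]
  rw [Nat.cast_sub (card_le_univ E)]
  ring

end Matrix

theorem stmt_13 {n : ℕ} (A : Matrix (Fin n) (Fin n) ℤ) (hA : IsASM A)
    (E F : Finset (Fin n))
    (hcover : ∀ i j, A i j ≠ 0 → i ∈ E ∨ j ∈ F) :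
    ((Finset.univ.filter (fun p : Fin n × Fin n =>
        p.1 ∈ E ∧ p.2 ∈ F ∧ A p.1 p.2 = -1)).card : ℤ) -
      ((Finset.univ.filter (fun p : Fin n × Fin n =>
        p.1 ∈ E ∧ p.2 ∈ F ∧ A p.1 p.2 = 1)).card : ℤ) = n - (E.card + F.card) ∧
    (n : ℤ) - (E.card + F.card) ≤ (E.card : ℤ) * F.card := by
  obtain ⟨hval, hrow, hcol, -, -⟩ := hA
  rw [filter_mem_and_mem_and, filter_mem_and_mem_and]
  have hsum := Matrix.sum_block_eq_of_row_col_sum_one A hrow hcol E F hcover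
  rw [← sum_product' (f := fun i j => A i j),
    sum_eq_card_filter_one_sub_card_filter_neg_one _ _ fun p _ => hval p.1 p.2,
    Fintype.card_fin] at hsum
  have hneg : (#((E ×ˢ F).filter (fun p => A p.1 p.2 = -1)) : ℤ) ≤ #E * #F := by
    exact_mod_cast (card_filter_le _ _).trans (card_product E F).le
  constructor <;> omega
end

section
/- Every n×n alternating sign matrix A can be obtained from the identity matrix I_n by a finite sequence of ASM-interchanges; equivalently, there is a finite sequence of ASMs I_n = A_0, A_1, ..., A_m = A such that each A_{k+1} − A_k equals ±T_{p,q;r,s} for some indices p<q, r<s. -/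
/-- The matrix T_{p,q;r,s}: +1 in positions (p,r), (q,s); -1 in (p,s), (q,r). -/
def Tmat {n : ℕ} (p q r s : Fin n) : Matrix (Fin n) (Fin n) ℤ :=
  Matrix.single p r 1 + Matrix.single q s 1 -
    Matrix.single p s 1 - Matrix.single q r 1

/-- One ASM-interchange step: add ±T_{p,q;r,s} (p<q, r<s) so that the result
is again an ASM. -/
def ASMStep {n : ℕ} (A B : Matrix (Fin n) (Fin n) ℤ) : Prop :=
  IsASM B ∧ ∃ p q r s : Fin n, p < q ∧ r < s ∧
    (B = A + Tmat p q r s ∨ B = A - Tmat p q r s)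

/-!
Encode a matrix `A` by its corner sums `c x y = ∑_{i < x, j < y} A i j` on the grid `[0, n]²`.
`A` is an ASM exactly when, in each of the two directions, `c` starts at `0`, its unit increments
are `0` or `1`, and they are all `1` along the far edge. Such a `c` is bounded by `min x y`, with
equality everywhere only for the identity, and adding `T_{a-1,a;b-1,b}` raises `c` by one at
`(a, b)` and nowhere else. If `c ≠ min`, then at a point with `c x y < min x y` minimising
`2 c x y - x - y` the four neighbours force `c` to be raisable there, so `A` arises by an
interchange from an ASM whose deficit `∑ (min x y - c x y)` is one smaller; induct on the deficit.
-/

open Finset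
open scoped Matrix

section CornerSumFunction

variable {n : ℕ} {c : ℕ → ℕ → ℤ}

structure ZeroOneSteps (n : ℕ) (c : ℕ → ℕ → ℤ) : Prop where
  zero : ∀ y, c 0 y = 0
  step : ∀ x < n, ∀ y ≤ n, c (x + 1) y - c x y = 0 ∨ c (x + 1) y - c x y = 1
  step_top : ∀ x < n, c (x + 1) n - c x n = 1

def IsCornerSumMatrix (n : ℕ) (c : ℕ → ℕ → ℤ) : Prop :=
  ZeroOneSteps n c ∧ ZeroOneSteps n (flip c)

def raiseAt (c : ℕ → ℕ → ℤ) (a b : ℕ) : ℕ → ℕ → ℤ :=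
  fun x y => c x y + if x = a ∧ y = b then 1 else 0

structure RaisableAt (n : ℕ) (c : ℕ → ℕ → ℤ) (a b : ℕ) : Prop where
  pos_left : 0 < a
  lt_left : a < n
  pos_right : 0 < b
  lt_right : b < n
  pred_left : c (a - 1) b = c a b
  pred_right : c a (b - 1) = c a b
  succ_left : c (a + 1) b = c a b + 1
  succ_right : c a (b + 1) = c a b + 1

def deficit (n : ℕ) (c : ℕ → ℕ → ℤ) : ℤ :=
  ∑ z ∈ range (n + 1) ×ˢ range (n + 1), (min (z.1 : ℤ) z.2 - c z.1 z.2)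

theorem ZeroOneSteps.apply_le (hc : ZeroOneSteps n c) {x y : ℕ} (hx : x ≤ n) (hy : y ≤ n) :
    c x y ≤ x := by
  induction x with
  | zero => simp [hc.zero]
  | succ x ih =>
    have := ih (by omega)
    rcases hc.step x hx y hy with h | h <;> omega

theorem ZeroOneSteps.apply_top (hc : ZeroOneSteps n c) {x : ℕ} (hx : x ≤ n) : c x n = x := by
  induction x with
  | zero => simp [hc.zero]
  | succ x ih =>
    have := ih (by omega)
    have := hc.step_top x hx
    omega

theorem ZeroOneSteps.raiseAt (hc : ZeroOneSteps n c) {a b : ℕ} (ha : 0 < a) (hb : b < n)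
    (hpred : c (a - 1) b = c a b) (hsucc : c (a + 1) b = c a b + 1) :
    ZeroOneSteps n (raiseAt c a b) where
  zero y := by simp [_root_.raiseAt, hc.zero, ha.ne]
  step x hx y hy := by
    have h := hc.step x hx y hy
    simp only [_root_.raiseAt]
    split_ifs with h₁ h₂ h₂
    · omega
    · obtain ⟨rfl, rfl⟩ := h₁
      simp only [Nat.add_sub_cancel] at hpred
      omega
    · obtain ⟨rfl, rfl⟩ := h₂
      omega
    · omega
  step_top x hx := by simpa [_root_.raiseAt, hb.ne'] using hc.step_top x hx

theorem flip_raiseAt (c : ℕ → ℕ → ℤ) (a b : ℕ) :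
    flip (raiseAt c a b) = raiseAt (flip c) b a := by
  funext y x
  simp [flip, raiseAt, and_comm]

theorem IsCornerSumMatrix.raiseAt (hc : IsCornerSumMatrix n c) {a b : ℕ}
    (h : RaisableAt n c a b) : IsCornerSumMatrix n (raiseAt c a b) :=
  ⟨hc.1.raiseAt h.pos_left h.lt_right h.pred_left h.succ_left,
    flip_raiseAt c a b ▸ hc.2.raiseAt h.pos_right h.lt_left h.pred_right h.succ_right⟩

theorem IsCornerSumMatrix.le_min (hc : IsCornerSumMatrix n c) {x y : ℕ} (hx : x ≤ n)
    (hy : y ≤ n) : c x y ≤ min (x : ℤ) y :=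
  _root_.le_min (hc.1.apply_le hx hy) (hc.2.apply_le hy hx)

theorem IsCornerSumMatrix.deficit_nonneg (hc : IsCornerSumMatrix n c) : 0 ≤ deficit n c := by
  refine sum_nonneg fun z hz => ?_
  simp only [mem_product, mem_range] at hz
  linarith [hc.le_min (x := z.1) (y := z.2) (by omega) (by omega)]

theorem IsCornerSumMatrix.deficit_eq_zero_iff (hc : IsCornerSumMatrix n c) :
    deficit n c = 0 ↔ ∀ x ≤ n, ∀ y ≤ n, c x y = min (x : ℤ) y := by
  rw [deficit, sum_eq_zero_iff_of_nonneg fun z hz => ?_]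
  · simp only [mem_product, mem_range, Prod.forall, sub_eq_zero, Nat.lt_succ_iff]
    exact ⟨fun h x hx y hy => (h x y ⟨hx, hy⟩).symm, fun h x y hxy => (h x hxy.1 y hxy.2).symm⟩
  · simp only [mem_product, mem_range] at hz
    linarith [hc.le_min (x := z.1) (y := z.2) (by omega) (by omega)]

theorem deficit_raiseAt (c : ℕ → ℕ → ℤ) {a b : ℕ} (ha : a ≤ n) (hb : b ≤ n) :
    deficit n (raiseAt c a b) = deficit n c - 1 := by
  have hpoint :
      ∑ z ∈ range (n + 1) ×ˢ range (n + 1), (if z = (a, b) then (1 : ℤ) else 0) = 1 := by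
    rw [sum_ite_eq', if_pos (mem_product.mpr ⟨mem_range.mpr (by omega), mem_range.mpr (by omega)⟩)]
  rw [deficit, deficit, ← hpoint, ← sum_sub_distrib]
  refine sum_congr rfl fun z _ => ?_
  simp only [_root_.raiseAt, Prod.ext_iff]
  ring

theorem IsCornerSumMatrix.raisableAt_of_forall_le (hc : IsCornerSumMatrix n c) {a b : ℕ}
    (ha : a ≤ n) (hb : b ≤ n) (hlt : c a b < min (a : ℤ) b)
    (hmin : ∀ x ≤ n, ∀ y ≤ n,
      min (x : ℤ) y ≤ c x y ∨ 2 * c a b - a - b ≤ 2 * c x y - x - y) :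
    RaisableAt n c a b := by
  have hstep₁ := hc.1.step
  have hstep₂ : ∀ y < n, ∀ x ≤ n, c x (y + 1) - c x y = 0 ∨ c x (y + 1) - c x y = 1 :=
    hc.2.step
  have ha₀ : 0 < a := Nat.pos_of_ne_zero fun h => by subst h; have := hc.1.zero b; omega
  have hb₀ : 0 < b := Nat.pos_of_ne_zero fun h => by
    subst h; have : c a 0 = 0 := hc.2.zero a; omega
  have han : a < n := lt_of_le_of_ne ha fun h => by
    rw [h] at hlt; have : c n b = b := hc.2.apply_top hb; omega
  have hbn : b < n := lt_of_le_of_ne hb fun h => by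
    rw [h] at hlt; have := hc.1.apply_top ha; omega
  refine ⟨ha₀, han, hb₀, hbn, ?_, ?_, ?_, ?_⟩
  · have := hstep₁ (a - 1) (by omega) b hb
    rw [Nat.sub_add_cancel ha₀] at this
    have := hmin (a - 1) (by omega) b hb
    omega
  · have := hstep₂ (b - 1) (by omega) a ha
    rw [Nat.sub_add_cancel hb₀] at this
    have := hmin a ha (b - 1) (by omega)
    omega
  · have := hstep₁ a han b hb
    have := hmin (a + 1) han b hb
    omega
  · have := hstep₂ b hbn a ha
    have := hmin a ha (b + 1) hbn
    omega

theorem IsCornerSumMatrix.exists_raisableAt (hc : IsCornerSumMatrix n c)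
    (h : deficit n c ≠ 0) : ∃ a b, RaisableAt n c a b := by
  let deficient := (range (n + 1) ×ˢ range (n + 1)).filter fun z => c z.1 z.2 < min (z.1 : ℤ) z.2
  have mem_deficient : ∀ x y, (x, y) ∈ deficient ↔ x ≤ n ∧ y ≤ n ∧ c x y < min (x : ℤ) y := by
    simp [deficient, and_assoc]
  obtain ⟨x₀, hx₀, y₀, hy₀, hlt₀⟩ : ∃ x ≤ n, ∃ y ≤ n, c x y < min (x : ℤ) y := by
    by_contra! hge
    exact h (hc.deficit_eq_zero_iff.mpr fun x hx y hy =>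
      (hc.le_min hx hy).antisymm (hge x hx y hy))
  obtain ⟨⟨a, b⟩, hab, hmin⟩ := deficient.exists_min_image (fun z => 2 * c z.1 z.2 - z.1 - z.2)
    ⟨(x₀, y₀), (mem_deficient _ _).mpr ⟨hx₀, hy₀, hlt₀⟩⟩
  obtain ⟨ha, hb, hlt⟩ := (mem_deficient a b).mp hab
  exact ⟨a, b, hc.raisableAt_of_forall_le ha hb hlt fun x hx y hy =>
    (le_or_gt _ _).imp_right fun hxy => hmin (x, y) ((mem_deficient x y).mpr ⟨hx, hy, hxy⟩)⟩

end CornerSumFunction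

section CornerSum

variable {n : ℕ} {A : Matrix (Fin n) (Fin n) ℤ}

theorem Fin.sum_filter_val_lt_succ {M : Type*} [AddCommMonoid M] (f : Fin n → M) (k : Fin n) :
    ∑ i : Fin n with i.val < k.val + 1, f i = ∑ i : Fin n with i.val < k.val, f i + f k := by
  rw [add_comm _ (f k), ← sum_insert (f := f) (by simp)]
  congr 1
  ext i
  simp only [mem_filter, mem_univ, true_and, mem_insert, Fin.ext_iff]
  omega

theorem Fin.sum_Iic_eq_sum_filter_val_lt {M : Type*} [AddCommMonoid M] (f : Fin n → M)
    (k : Fin n) : ∑ i ∈ Iic k, f i = ∑ i : Fin n with i.val < k.val + 1, f i := by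
  congr 1
  ext i
  simp only [mem_Iic, mem_filter, mem_univ, true_and, Fin.le_iff_val_le_val]
  omega

theorem Fin.sum_filter_val_lt_self {M : Type*} [AddCommMonoid M] (f : Fin n → M) :
    ∑ i : Fin n with i.val < n, f i = ∑ i, f i := by
  rw [filter_true_of_mem fun i _ => i.isLt]

def cornerSum (A : Matrix (Fin n) (Fin n) ℤ) (x y : ℕ) : ℤ :=
  ∑ i : Fin n with i.val < x, ∑ j : Fin n with j.val < y, A i j

theorem cornerSum_zero_left (A : Matrix (Fin n) (Fin n) ℤ) (y : ℕ) : cornerSum A 0 y = 0 := by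
  simp [cornerSum]

theorem cornerSum_succ_left (A : Matrix (Fin n) (Fin n) ℤ) (i : Fin n) (y : ℕ) :
    cornerSum A (i + 1) y = cornerSum A i y + ∑ j : Fin n with j.val < y, A i j :=
  Fin.sum_filter_val_lt_succ _ i

theorem cornerSum_transpose (A : Matrix (Fin n) (Fin n) ℤ) :
    cornerSum Aᵀ = flip (cornerSum A) := by
  funext x y
  simp only [cornerSum, flip, Matrix.transpose_apply]
  exact sum_comm

theorem apply_eq_cornerSum (A : Matrix (Fin n) (Fin n) ℤ) (i j : Fin n) :
    A i j = cornerSum A (i + 1) (j + 1) - cornerSum A i (j + 1)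
      - (cornerSum A (i + 1) j - cornerSum A i j) := by
  rw [cornerSum_succ_left, cornerSum_succ_left, Fin.sum_filter_val_lt_succ]
  ring

theorem zeroOneSteps_cornerSum_iff :
    ZeroOneSteps n (cornerSum A) ↔
      (∀ i, ∑ j, A i j = 1) ∧
        ∀ i k, ∑ j ∈ Iic k, A i j = 0 ∨ ∑ j ∈ Iic k, A i j = 1 := by
  have hrow : ∀ (i : Fin n) y,
      cornerSum A (i + 1) y - cornerSum A i y = ∑ j : Fin n with j.val < y, A i j := by
    intro i y
    rw [cornerSum_succ_left]
    ring
  constructor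
  · intro h
    refine ⟨fun i => ?_, fun i k => ?_⟩
    · simpa [hrow, Fin.sum_filter_val_lt_self] using h.step_top i i.isLt
    · simpa [hrow, Fin.sum_Iic_eq_sum_filter_val_lt] using h.step i i.isLt (k + 1) k.isLt
  · rintro ⟨hsum, hprefix⟩
    refine ⟨cornerSum_zero_left A, fun x hx y hy => ?_, fun x hx => ?_⟩
    · obtain ⟨i, rfl⟩ : ∃ i : Fin n, i.val = x := ⟨⟨x, hx⟩, rfl⟩
      rw [hrow]
      rcases y with _ | k
      · simp
      · simpa [Fin.sum_Iic_eq_sum_filter_val_lt] using hprefix i ⟨k, hy⟩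
    · obtain ⟨i, rfl⟩ : ∃ i : Fin n, i.val = x := ⟨⟨x, hx⟩, rfl⟩
      rw [hrow, Fin.sum_filter_val_lt_self, hsum]

theorem ZeroOneSteps.apply_mem_of_cornerSum (h : ZeroOneSteps n (cornerSum A)) (i j : Fin n) :
    A i j = 0 ∨ A i j = 1 ∨ A i j = -1 := by
  have h₁ := h.step i i.isLt (j + 1) j.isLt
  have h₂ := h.step i i.isLt j j.isLt.le
  rw [apply_eq_cornerSum A i j]
  omega

theorem isASM_iff_isCornerSumMatrix : IsASM A ↔ IsCornerSumMatrix n (cornerSum A) := by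
  rw [IsCornerSumMatrix, ← cornerSum_transpose]
  constructor
  · rintro ⟨-, hrow, hcol, hprow, hpcol⟩
    exact ⟨zeroOneSteps_cornerSum_iff.mpr ⟨hrow, hprow⟩,
      zeroOneSteps_cornerSum_iff.mpr ⟨hcol, hpcol⟩⟩
  · rintro ⟨hA, hAt⟩
    obtain ⟨hrow, hprow⟩ := zeroOneSteps_cornerSum_iff.mp hA
    obtain ⟨hcol, hpcol⟩ := zeroOneSteps_cornerSum_iff.mp hAt
    exact ⟨hA.apply_mem_of_cornerSum, hrow, hcol, hprow, hpcol⟩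

theorem cornerSum_add (A B : Matrix (Fin n) (Fin n) ℤ) (x y : ℕ) :
    cornerSum (A + B) x y = cornerSum A x y + cornerSum B x y := by
  simp [cornerSum, sum_add_distrib]

theorem cornerSum_sub (A B : Matrix (Fin n) (Fin n) ℤ) (x y : ℕ) :
    cornerSum (A - B) x y = cornerSum A x y - cornerSum B x y := by
  simp [cornerSum, sum_sub_distrib]

theorem cornerSum_single_one (u v : Fin n) (x y : ℕ) :
    cornerSum (Matrix.single u v 1) x y = if u.val < x ∧ v.val < y then 1 else 0 := by
  simp [cornerSum, Matrix.single_apply, ite_and]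

theorem cornerSum_Tmat {p q r s : Fin n} (hq : q.val = p.val + 1) (hs : s.val = r.val + 1)
    (x y : ℕ) : cornerSum (Tmat p q r s) x y = if x = q.val ∧ y = s.val then 1 else 0 := by
  simp only [Tmat, cornerSum_sub, cornerSum_add, cornerSum_single_one]
  split_ifs <;> omega

theorem eq_one_of_cornerSum_eq_min (h : ∀ x ≤ n, ∀ y ≤ n, cornerSum A x y = min (x : ℤ) y) :
    A = 1 := by
  ext i j
  have := apply_eq_cornerSum A i j
  rw [h _ i.isLt _ j.isLt, h _ i.isLt.le _ j.isLt, h _ i.isLt _ j.isLt.le,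
    h _ i.isLt.le _ j.isLt.le] at this
  rw [this, Matrix.one_apply]
  split_ifs with hij
  · subst hij
    omega
  · have := Fin.val_ne_of_ne hij
    omega

end CornerSum

section Interchange

variable {n : ℕ} {A : Matrix (Fin n) (Fin n) ℤ}

theorem IsASM.exists_asmStep (hA : IsASM A) (h : deficit n (cornerSum A) ≠ 0) :
    ∃ B, IsASM B ∧ ASMStep B A ∧ deficit n (cornerSum B) = deficit n (cornerSum A) - 1 := by
  have hc := isASM_iff_isCornerSumMatrix.mp hA
  obtain ⟨a, b, hab⟩ := hc.exists_raisableAt h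
  have ⟨ha₀, han, hb₀, hbn, _, _, _, _⟩ := hab
  let p : Fin n := ⟨a - 1, by omega⟩
  let q : Fin n := ⟨a, han⟩
  let r : Fin n := ⟨b - 1, by omega⟩
  let s : Fin n := ⟨b, hbn⟩
  have hB : cornerSum (A + Tmat p q r s) = raiseAt (cornerSum A) a b := by
    funext x y
    rw [cornerSum_add, cornerSum_Tmat (p := p) (r := r) (by simp [p, q]; omega)
      (by simp [r, s]; omega)]
    rfl
  refine ⟨A + Tmat p q r s, ?_, ⟨hA, p, q, r, s, Fin.mk_lt_mk.mpr (by omega),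
    Fin.mk_lt_mk.mpr (by omega), Or.inr (add_sub_cancel_right A _).symm⟩, ?_⟩
  · rw [isASM_iff_isCornerSumMatrix, hB]
    exact hc.raiseAt hab
  · rw [hB, deficit_raiseAt _ han.le hbn.le]

theorem IsASM.eq_one_of_deficit_eq_zero (hA : IsASM A) (h : deficit n (cornerSum A) = 0) :
    A = 1 :=
  eq_one_of_cornerSum_eq_min ((isASM_iff_isCornerSumMatrix.mp hA).deficit_eq_zero_iff.mp h)

theorem reflTransGen_asmStep_one_of_deficit_eq (k : ℕ) :
    ∀ A : Matrix (Fin n) (Fin n) ℤ, IsASM A → deficit n (cornerSum A) = k →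
      Relation.ReflTransGen ASMStep 1 A := by
  induction k with
  | zero =>
    intro A hA hk
    rw [hA.eq_one_of_deficit_eq_zero hk]
  | succ k ih =>
    intro A hA hk
    obtain ⟨B, hB, hBA, hdef⟩ := hA.exists_asmStep (by omega)
    exact (ih B hB (by omega)).tail hBA

end Interchange

theorem stmt_19 {n : ℕ} (A : Matrix (Fin n) (Fin n) ℤ) (hA : IsASM A) :
    Relation.ReflTransGen ASMStep (1 : Matrix (Fin n) (Fin n) ℤ) A :=
  reflTransGen_asmStep_one_of_deficit_eq _ A hA
    (Int.toNat_of_nonneg (isASM_iff_isCornerSumMatrix.mp hA).deficit_nonneg).symm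
end
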